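/- Let K be a field of characteristic zero equipped with a derivation δ, extend δ to a derivation of K(X) by setting δ(X) = 0, and let D be the derivative with respect to X on K(X). Suppose a ∈ K(X) can be written as a = D(g_0) + Σ_{ℓ=1}^{L} γ_ℓ/(X − β_ℓ) with g_0 ∈ K(X), pairwise distinct β_1, …, β_L ∈ K, and γ_1, …, γ_L ∈ K, and suppose there exists b ∈ K(X) with δ(a) = D(b). Then δ(γ_ℓ) = 0 for every ℓ = 1, …, L. (The residues appearing in a compatible system are constants.) -/

import Mathlib

/-!
Since `δ'` and `D` commute on `K` and on `X`, they commute on `K(X)`, so applying `δ'` to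
`a = D g₀ + ∑ γ_ℓ / (X - β_ℓ)` gives
`δ' a = D (δ' g₀ - ∑ γ_ℓ δ(β_ℓ) / (X - β_ℓ)) + ∑ δ(γ_ℓ) / (X - β_ℓ)`.
Hence `∑ δ(γ_ℓ) / (X - β_ℓ)` is itself a derivative `D h`. But a derivative has no simple
poles: where `h = p / q` has a pole of order `m ≥ 1`, the numerator `q p' - q' p` of `D h`
vanishes to order exactly `m - 1` in characteristic zero, so `D h` has a pole of order `m + 1`.
Therefore every residue `δ(γ_ℓ)` is zero.
-/

open Polynomial

section

variable {K : Type*} [Field K]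

lemma RatFunc.X_sub_C_ne_zero (b : K) : RatFunc.X - RatFunc.C b ≠ 0 := by
  rw [← RatFunc.algebraMap_X, ← RatFunc.algebraMap_C, ← map_sub]
  exact RatFunc.algebraMap_ne_zero (Polynomial.X_sub_C_ne_zero b)

lemma RatFunc.eq_zero_of_leibniz {E : RatFunc K → RatFunc K}
    (hadd : ∀ f g, E (f + g) = E f + E g) (hmul : ∀ f g, E (f * g) = f * E g + g * E f)
    (hC : ∀ x, E (RatFunc.C x) = 0) (hX : E RatFunc.X = 0) (f : RatFunc K) : E f = 0 := by
  have hpoly (p : K[X]) : E (algebraMap K[X] (RatFunc K) p) = 0 := by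
    induction p using Polynomial.induction_on with
    | C x => rw [RatFunc.algebraMap_C, hC]
    | add p q hp hq => rw [map_add, hadd, hp, hq, add_zero]
    | monomial n x ih =>
      rw [pow_succ, ← mul_assoc, map_mul, hmul, ih, RatFunc.algebraMap_X, hX, mul_zero, mul_zero,
        add_zero]
  have hdenom : algebraMap K[X] (RatFunc K) f.denom ≠ 0 :=
    RatFunc.algebraMap_ne_zero f.denom_ne_zero
  have hnum : algebraMap K[X] (RatFunc K) f.num = f * algebraMap K[X] (RatFunc K) f.denom :=
    (div_eq_iff hdenom).mp f.num_div_denom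
  have h := hpoly f.num
  rw [hnum, hmul, hpoly, mul_zero, zero_add] at h
  exact (mul_eq_zero.mp h).resolve_left hdenom

-- The commutator is not available as a `Derivation ℤ` here: the `ℤ`-module structure of the
-- codomain is `AddCommGroup.toIntModule`, not the one coming from `Algebra ℤ (RatFunc K)`.
lemma RatFunc.derivation_comm {d₁ d₂ : Derivation ℤ (RatFunc K) (RatFunc K)}
    (hC : ∀ x, d₁ (d₂ (RatFunc.C x)) = d₂ (d₁ (RatFunc.C x)))
    (hX : d₁ (d₂ RatFunc.X) = d₂ (d₁ RatFunc.X)) (f : RatFunc K) :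
    d₁ (d₂ f) = d₂ (d₁ f) := by
  rw [← sub_eq_zero]
  refine RatFunc.eq_zero_of_leibniz (E := fun f => d₁ (d₂ f) - d₂ (d₁ f)) (fun f g => ?_)
    (fun f g => ?_) (fun x => sub_eq_zero.mpr (hC x)) (sub_eq_zero.mpr hX) f
  · simp only [map_add]
    ring
  · simp only [Derivation.leibniz, smul_eq_mul, map_add]
    ring

lemma Derivation.map_ratFunc_C (D : Derivation K (RatFunc K) (RatFunc K)) (x : K) :
    D (RatFunc.C x) = 0 := by
  rw [← RatFunc.algebraMap_eq_C, D.map_algebraMap]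

lemma Polynomial.wronskian_X_sub_C_pow_mul {R : Type*} [CommRing R] (b : R) (k : ℕ)
    (r p : R[X]) :
    wronskian ((X - C b) ^ (k + 1) * r) p
      = (X - C b) ^ k * ((X - C b) * wronskian r p - C ((k : R) + 1) * r * p) := by
  simp only [wronskian, derivative_mul, derivative_pow, derivative_X_sub_C, Nat.add_sub_cancel]
  push_cast
  ring

-- At a pole of order `k + 1` of `p / q`, its derivative `wronskian q p / q ^ 2` has a pole of
-- order `k + 2`, so it cannot be a simple pole.
lemma Polynomial.wronskian_mul_ne_of_isRoot [CharZero K] {p r u v : K[X]} {b c : K} {k : ℕ}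
    (hp : p.eval b ≠ 0) (hr : r.eval b ≠ 0) (hv : v.eval b ≠ 0) :
    wronskian ((X - C b) ^ (k + 1) * r) p * ((X - C b) * v)
      ≠ (C c * v + (X - C b) * u) * ((X - C b) ^ (k + 1) * r) ^ 2 := by
  intro h
  set s : K[X] := X - C b
  have hcancel : (s * wronskian r p - C ((k : K) + 1) * r * p) * v
      = s ^ (k + 1) * ((C c * v + s * u) * r ^ 2) := by
    refine mul_left_cancel₀ (pow_ne_zero (k + 1) (X_sub_C_ne_zero b)) ?_
    rw [wronskian_X_sub_C_pow_mul] at h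
    linear_combination h
  have hs : s.eval b = 0 := by simp [s]
  have heval := congrArg (eval b) hcancel
  simp only [eval_mul, eval_sub, eval_pow, eval_C, hs, zero_mul, zero_sub,
    zero_pow (Nat.succ_ne_zero k)] at heval
  have hk : ((k : K) + 1) ≠ 0 := Nat.cast_add_one_ne_zero k
  simp [hk, hr, hp, hv] at heval

lemma Polynomial.eq_zero_of_wronskian_mul_eq [CharZero K] {p q u v : K[X]} {b c : K}
    (hpq : IsCoprime p q) (hq : q ≠ 0) (hv : v.eval b ≠ 0)
    (h : wronskian q p * ((X - C b) * v) = (C c * v + (X - C b) * u) * q ^ 2) : c = 0 := by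
  obtain ⟨r, hqr, hr⟩ := q.exists_eq_pow_rootMultiplicity_mul_and_not_dvd hq b
  have hrb : r.eval b ≠ 0 := fun h0 => hr (dvd_iff_isRoot.mpr h0)
  generalize q.rootMultiplicity b = m at hqr
  subst hqr
  cases m with
  | zero =>
    have heval := congrArg (eval b) h
    simp only [eval_mul, eval_add, eval_sub, eval_pow, eval_C, eval_X, sub_self, zero_mul,
      mul_zero, pow_zero, one_mul, add_zero] at heval
    simpa [hv, hrb] using heval.symm
  | succ k =>
    have hpb : p.eval b ≠ 0 := by
      obtain ⟨x, y, hxy⟩ := hpq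
      intro hpb
      simpa [hpb] using congrArg (eval b) hxy
    exact absurd h (wronskian_mul_ne_of_isRoot hpb hrb hv)

def RatFunc.regularAt (b : K) : AddSubmonoid (RatFunc K) where
  carrier := {f | ∃ u v : K[X], v.eval b ≠ 0 ∧
    f = algebraMap K[X] (RatFunc K) u / algebraMap K[X] (RatFunc K) v}
  zero_mem' := ⟨0, 1, by simp, by simp⟩
  add_mem' := by
    rintro _ _ ⟨u₁, v₁, hv₁, rfl⟩ ⟨u₂, v₂, hv₂, rfl⟩
    have hv₁0 : v₁ ≠ 0 := by rintro rfl; simp at hv₁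
    have hv₂0 : v₂ ≠ 0 := by rintro rfl; simp at hv₂
    refine ⟨u₁ * v₂ + v₁ * u₂, v₁ * v₂, by simp [hv₁, hv₂], ?_⟩
    rw [div_add_div _ _ (RatFunc.algebraMap_ne_zero hv₁0) (RatFunc.algebraMap_ne_zero hv₂0)]
    simp only [map_add, map_mul]

lemma RatFunc.C_div_X_sub_C_mem_regularAt {b y : K} (hy : y ≠ b) (x : K) :
    RatFunc.C x / (RatFunc.X - RatFunc.C y) ∈ RatFunc.regularAt b :=
  ⟨Polynomial.C x, Polynomial.X - Polynomial.C y, by simpa [sub_eq_zero] using hy.symm, by simp⟩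

section DerivativeInX

variable (D : Derivation K (RatFunc K) (RatFunc K))
  (hD : ∀ p : K[X], D (algebraMap K[X] (RatFunc K) p)
    = algebraMap K[X] (RatFunc K) (derivative p))
include hD

lemma derivation_X_eq_one : D RatFunc.X = 1 := by
  simpa using hD X

lemma derivation_algebraMap_div (p q : K[X]) :
    D (algebraMap K[X] (RatFunc K) p / algebraMap K[X] (RatFunc K) q)
      = algebraMap K[X] (RatFunc K) (wronskian q p) / algebraMap K[X] (RatFunc K) (q ^ 2) := by
  rw [Derivation.leibniz_div, hD, hD, wronskian]
  simp only [smul_eq_mul, map_sub, map_mul, map_pow, inv_pow, div_eq_inv_mul]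
  ring

lemma residue_eq_zero_of_derivation_eq [CharZero K] {h f : RatFunc K} {b c : K}
    (hf : f ∈ RatFunc.regularAt b)
    (heq : D h = RatFunc.C c / (RatFunc.X - RatFunc.C b) + f) : c = 0 := by
  obtain ⟨u, v, hv, rfl⟩ := hf
  have hv0 : v ≠ 0 := by rintro rfl; simp at hv
  refine eq_zero_of_wronskian_mul_eq (u := u) (RatFunc.isCoprime_num_denom h) h.denom_ne_zero hv
    (RatFunc.algebraMap_injective K ?_)
  rw [← h.num_div_denom, derivation_algebraMap_div D hD, ← RatFunc.algebraMap_C,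
    show RatFunc.X - RatFunc.C b = algebraMap K[X] (RatFunc K) (X - C b) by simp,
    div_add_div _ _ (RatFunc.algebraMap_ne_zero (X_sub_C_ne_zero b))
      (RatFunc.algebraMap_ne_zero hv0),
    div_eq_div_iff (RatFunc.algebraMap_ne_zero (pow_ne_zero 2 h.denom_ne_zero))
      (mul_ne_zero (RatFunc.algebraMap_ne_zero (X_sub_C_ne_zero b))
        (RatFunc.algebraMap_ne_zero hv0))] at heq
  simpa only [map_mul, map_add] using heq

lemma residues_eq_zero_of_derivation_eq_sum [CharZero K] {ι : Type*} [Fintype ι]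
    {β c : ι → K} (hβ : Function.Injective β) {h : RatFunc K}
    (heq : D h = ∑ i, RatFunc.C (c i) / (RatFunc.X - RatFunc.C (β i))) (i : ι) : c i = 0 := by
  classical
  rw [← Finset.add_sum_erase _ _ (Finset.mem_univ i)] at heq
  refine residue_eq_zero_of_derivation_eq D hD (AddSubmonoid.sum_mem _ fun j hj => ?_) heq
  exact RatFunc.C_div_X_sub_C_mem_regularAt (hβ.ne (Finset.ne_of_mem_erase hj)) (c j)

end DerivativeInX

lemma derivation_C_div_X_sub_C {δ : Derivation ℤ K K}
    {δ' : Derivation ℤ (RatFunc K) (RatFunc K)}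
    (hδ'C : ∀ x : K, δ' (RatFunc.C x) = RatFunc.C (δ x)) (hδ'X : δ' RatFunc.X = 0)
    (D : Derivation K (RatFunc K) (RatFunc K)) (hDX : D RatFunc.X = 1) (x y : K) :
    δ' (RatFunc.C x / (RatFunc.X - RatFunc.C y))
      = RatFunc.C (δ x) / (RatFunc.X - RatFunc.C y)
        - D (RatFunc.C (x * δ y) / (RatFunc.X - RatFunc.C y)) := by
  have hy := RatFunc.X_sub_C_ne_zero y
  simp only [Derivation.leibniz_div, hδ'C, hδ'X, map_sub, D.map_ratFunc_C, hDX, smul_eq_mul]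
  field_simp
  rw [map_mul]
  ring

end

/-- **The residues appearing in a compatible system are constants.**
`K` is a field of characteristic zero with a derivation `δ`, extended to a derivation
`δ'` of `K(X) = RatFunc K` with `δ'(X) = 0`, and `D` is the unique derivation on `K(X)`
extending the polynomial derivative `d/dX`.  If
`a = D(g₀) + Σ_ℓ γ_ℓ/(X − β_ℓ)` with pairwise distinct `β_ℓ ∈ K` and `γ_ℓ ∈ K`,
and `δ'(a) = D(b)` for some `b ∈ K(X)`, then `δ(γ_ℓ) = 0` for every `ℓ`. -/
theorem residues_are_constants
    (K : Type*) [Field K] [CharZero K]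
    (δ : Derivation ℤ K K)
    (δ' : Derivation ℤ (RatFunc K) (RatFunc K))
    (hδ'C : ∀ x : K, δ' (RatFunc.C x) = RatFunc.C (δ x))
    (hδ'X : δ' RatFunc.X = 0)
    (D : Derivation K (RatFunc K) (RatFunc K))
    (hD : ∀ p : Polynomial K,
      D (algebraMap (Polynomial K) (RatFunc K) p)
        = algebraMap (Polynomial K) (RatFunc K) (Polynomial.derivative p))
    (L : ℕ) (β γ : Fin L → K) (hβ : Function.Injective β)
    (a g₀ : RatFunc K)
    (ha : a = D g₀ + ∑ ℓ, RatFunc.C (γ ℓ) / (RatFunc.X - RatFunc.C (β ℓ)))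
    (hb : ∃ b : RatFunc K, δ' a = D b) :
    ∀ ℓ, δ (γ ℓ) = 0 := by
  obtain ⟨b, hb⟩ := hb
  have hDX := derivation_X_eq_one D hD
  have hcomm (f : RatFunc K) : δ' (D f) = D (δ' f) :=
    RatFunc.derivation_comm (d₂ := D.restrictScalars ℤ)
      (fun x => by simp [D.map_ratFunc_C, hδ'C]) (by simp [hDX, hδ'X]) f
  refine residues_eq_zero_of_derivation_eq_sum D hD hβ
    (h := b - δ' g₀ + ∑ ℓ, RatFunc.C (γ ℓ * δ (β ℓ)) / (RatFunc.X - RatFunc.C (β ℓ))) ?_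
  rw [map_add, map_sub, ← hb, ha, map_add, hcomm, map_sum, map_sum]
  simp only [derivation_C_div_X_sub_C hδ'C hδ'X D hDX, Finset.sum_sub_distrib]
  ring
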